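/- Let λ > 0. For the generalized CF objective F with the minus interaction f(u,v) = u − v, no point (U, V, w) in which U and V are not both zero is a global minimizer of F: for any such point there exists another point with strictly smaller objective value (namely (βU, βV, β⁻¹w) for any β ∈ (0,1)). -/
import Mathlib


open Finset

/-- Generalized CF objective with the minus interaction `f(u,v) = u - v`:
`F(U,V,w) = Σ_{(i,j)∈Ω} ℓ(⟨w, u_i - v_j⟩, O_{ij}) + (λ/2)Σ_i ‖u_i‖² + (λ/2)Σ_j ‖v_j‖²`. -/
noncomputable def cfObjMinus {k m n : ℕ} (lam : ℝ) (Ω : Finset (Fin m × Fin n))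
    (O : Fin m × Fin n → ℝ) (ℓ : ℝ × ℝ → ℝ)
    (U : Fin m → Fin k → ℝ) (V : Fin n → Fin k → ℝ) (w : Fin k → ℝ) : ℝ :=
  (∑ p ∈ Ω, ℓ (∑ l, w l * (U p.1 l - V p.2 l), O p))
    + lam / 2 * ∑ i, ∑ l, (U i l) ^ 2
    + lam / 2 * ∑ j, ∑ l, (V j l) ^ 2

/-- For `λ > 0`, no point `(U, V, w)` with `U` and `V` not both zero is a global
minimizer of the generalized CF objective with the minus interaction: there is another
point with strictly smaller objective value. -/
theorem no_nonzero_global_minimizer_minus {k m n : ℕ} (lam : ℝ) (hlam : 0 < lam)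
    (Ω : Finset (Fin m × Fin n)) (O : Fin m × Fin n → ℝ) (ℓ : ℝ × ℝ → ℝ) :
    ∀ (U : Fin m → Fin k → ℝ) (V : Fin n → Fin k → ℝ) (w : Fin k → ℝ),
      ¬ (U = 0 ∧ V = 0) →
      ∃ (U' : Fin m → Fin k → ℝ) (V' : Fin n → Fin k → ℝ) (w' : Fin k → ℝ),
        cfObjMinus lam Ω O ℓ U' V' w' < cfObjMinus lam Ω O ℓ U V w := by

  intro U V w hUV
  refine ⟨fun i l => (1/2) * U i l, fun j l => (1/2) * V j l, fun l => 2 * w l, ?_⟩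
  have hloss : (∑ p ∈ Ω, ℓ (∑ l, (2 * w l) * ((1/2) * U p.1 l - (1/2) * V p.2 l), O p))
      = ∑ p ∈ Ω, ℓ (∑ l, w l * (U p.1 l - V p.2 l), O p) := by
    apply Finset.sum_congr rfl
    intro p _
    congr 1
    congr 1
    apply Finset.sum_congr rfl
    intro l _
    ring
  have hsU : (∑ i, ∑ l, ((1/2 : ℝ) * U i l) ^ 2) = (1/4) * ∑ i, ∑ l, (U i l) ^ 2 := by
    rw [Finset.mul_sum]; apply Finset.sum_congr rfl; intro i _
    rw [Finset.mul_sum]; apply Finset.sum_congr rfl; intro l _; ring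
  have hsV : (∑ j, ∑ l, ((1/2 : ℝ) * V j l) ^ 2) = (1/4) * ∑ j, ∑ l, (V j l) ^ 2 := by
    rw [Finset.mul_sum]; apply Finset.sum_congr rfl; intro j _
    rw [Finset.mul_sum]; apply Finset.sum_congr rfl; intro l _; ring
  have hpos : 0 < (∑ i, ∑ l, (U i l) ^ 2) + ∑ j, ∑ l, (V j l) ^ 2 := by
    have hUnn : (0:ℝ) ≤ ∑ i, ∑ l, (U i l) ^ 2 :=
      Finset.sum_nonneg fun i _ => Finset.sum_nonneg fun l _ => sq_nonneg _
    have hVnn : (0:ℝ) ≤ ∑ j, ∑ l, (V j l) ^ 2 :=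
      Finset.sum_nonneg fun j _ => Finset.sum_nonneg fun l _ => sq_nonneg _
    rcases not_and_or.mp hUV with h | h
    · have : ∃ i l, U i l ≠ 0 := by
        by_contra hc
        push_neg at hc
        exact h (funext fun i => funext fun l => hc i l)
      obtain ⟨i, l, hil⟩ := this
      have hU : 0 < ∑ i, ∑ l, (U i l) ^ 2 := by
        have h1 : 0 < ∑ l, (U i l) ^ 2 :=
          Finset.sum_pos' (fun l _ => sq_nonneg _)
            ⟨l, Finset.mem_univ l, by positivity⟩
        exact Finset.sum_pos' (fun i _ => Finset.sum_nonneg fun l _ => sq_nonneg _)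
          ⟨i, Finset.mem_univ i, h1⟩
      linarith
    · have : ∃ j l, V j l ≠ 0 := by
        by_contra hc
        push_neg at hc
        exact h (funext fun j => funext fun l => hc j l)
      obtain ⟨j, l, hjl⟩ := this
      have hV : 0 < ∑ j, ∑ l, (V j l) ^ 2 := by
        have h1 : 0 < ∑ l, (V j l) ^ 2 :=
          Finset.sum_pos' (fun l _ => sq_nonneg _)
            ⟨l, Finset.mem_univ l, by positivity⟩
        exact Finset.sum_pos' (fun j _ => Finset.sum_nonneg fun l _ => sq_nonneg _)
          ⟨j, Finset.mem_univ j, h1⟩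
      linarith
  simp only [cfObjMinus, hloss, hsU, hsV]
  nlinarith [hpos, hlam]
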